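/- Let L = {x^a, y^b, z^c} with x < y < z, v = a+b+c+1, and a + b < z - x - 1. Then L has no x-growable realization. -/

import Mathlib

def pathLen (v p q : ℕ) : ℕ := min (Nat.dist p q) (v - Nat.dist p q)

def lengths (v : ℕ) (h : List ℕ) : Multiset ℕ :=
  (List.zipWith (pathLen v) h h.tail : List ℕ)

def IsHamPath (v : ℕ) (h : List ℕ) : Prop :=
  h.Nodup ∧ h.length = v ∧ ∀ p ∈ h, p < v

/-- The growth embedding at `m` with parameter `x`. -/
def gemb (m x p : ℕ) : ℕ := if p ≤ m then p else p + x

/-- The edge `e` of `K_v` has its length increased by the growth embedding. -/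
def EdgeIncr (v x m : ℕ) (e : ℕ × ℕ) : Prop :=
  pathLen v e.1 e.2 < pathLen (v + x) (gemb m x e.1) (gemb m x e.2)

/-- The Hamiltonian path `h` is `x`-growable at `m`: each vertex `p` with
`m - x < p ≤ m` is incident with exactly one path-edge whose length is increased
by the growth embedding, and no other path-edge has its length increased. -/
def Growable (v x m : ℕ) (h : List ℕ) : Prop :=
  x ≤ m + 1 ∧
  (∀ p : ℕ, m < p + x → p ≤ m →
    ((h.zip h.tail).countP fun e =>
      decide ((e.1 = p ∨ e.2 = p) ∧
        pathLen v e.1 e.2 < pathLen (v + x) (gemb m x e.1) (gemb m x e.2))) = 1) ∧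
  ∀ e ∈ h.zip h.tail, EdgeIncr v x m e → ∃ p, m < p + x ∧ p ≤ m ∧ (e.1 = p ∨ e.2 = p)


/-!
Each vertex `p` with `m - x < p ≤ m` lies on exactly one lengthened edge and every lengthened
edge passes through such a vertex, so an `x`-growable path has at most `x` lengthened edges.
A chord `{s, s + z mod v}` of length `z` is lengthened exactly when the gap opened after `m`
lies on its short arc, which happens for `z` of the possible values of `s`; so at most `v - z`
chords of length `z` keep their length. Hence the `c` edges of length `z` satisfy
`c ≤ x + (v - z)`, i.e. `z ≤ a + b + x + 1`.
-/

open Finset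

lemma List.countP_le_sum_countP {ι α : Type*} {l : List α} {P : α → Bool} {T : Finset ι}
    {Q : ι → α → Bool} (H : ∀ a ∈ l, P a → ∃ i ∈ T, Q i a) :
    l.countP P ≤ ∑ i ∈ T, l.countP (Q i) := by
  induction l with
  | nil => simp
  | cons a l ih =>
    have ih := ih fun b hb => H b (List.mem_cons_of_mem a hb)
    simp only [List.countP_cons, Finset.sum_add_distrib]
    by_cases hPa : P a
    · obtain ⟨i, hiT, hQ⟩ := H a List.mem_cons_self hPa
      have : 1 ≤ ∑ j ∈ T, if Q j a then 1 else 0 := by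
        simpa [hQ] using Finset.single_le_sum (f := fun j => if Q j a then 1 else 0)
          (fun _ _ => Nat.zero_le _) hiT
      rw [if_pos hPa]
      omega
    · rw [if_neg hPa]
      omega

lemma List.countP_le_countP_add_countP {α : Type*} (l : List α) (p q : α → Bool) :
    l.countP p ≤ l.countP q + l.countP (fun a => p a && !q a) := by
  induction l with
  | nil => simp
  | cons a l ih =>
    simp only [List.countP_cons]
    cases p a <;> cases q a <;> simp only [Bool.and_true, Bool.and_false, Bool.not_true,
      Bool.not_false, Bool.false_eq_true, if_true, if_false] <;> omega

lemma card_le_card_of_fst_mem {F : Finset (ℕ × ℕ)} {S : Finset ℕ} {d : ℕ}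
    (hd : ∀ e ∈ F, e.2 = e.1 + d) (hS : ∀ e ∈ F, e.1 ∈ S) : #F ≤ #S :=
  card_le_card_of_injOn Prod.fst hS fun e he e' he' h =>
    Prod.ext h (by rw [hd e he, hd e' he', h])

lemma card_filter_straddle_le (n k m : ℕ) :
    #{p ∈ range n | p ≤ m ∧ m < p + k} ≤ #{p ∈ range k | p ≤ m ∧ m < p + n} :=
  card_le_card_of_injOn (m - ·)
    (fun p hp => by simp only [coe_filter, Set.mem_ofPred_eq, mem_range] at hp ⊢; omega)
    (fun p hp q hq h => by simp only [coe_filter, Set.mem_ofPred_eq, mem_range] at hp hq h; omega)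

section Chords

variable {v x m p q z : ℕ}

lemma pathLen_comm (v p q : ℕ) : pathLen v p q = pathLen v q p := by
  simp only [pathLen, Nat.dist_comm]

lemma two_mul_pathLen_le (v p q : ℕ) : 2 * pathLen v p q ≤ v := by
  unfold pathLen
  omega

lemma pathLen_of_lt (hpq : p < q) : pathLen v p q = min (q - p) (v - (q - p)) := by
  rw [pathLen, Nat.dist_eq_sub_of_le hpq.le]

instance (v x m : ℕ) : DecidablePred (EdgeIncr v x m) :=
  fun _ => inferInstanceAs (Decidable (_ < _))

lemma edgeIncr_swap {e : ℕ × ℕ} : EdgeIncr v x m e.swap ↔ EdgeIncr v x m e := by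
  simp only [EdgeIncr, Prod.fst_swap, Prod.snd_swap, pathLen_comm]

lemma edgeIncr_iff (hx : 0 < x) (hpq : p < q) (hqv : q < v) :
    EdgeIncr v x m (p, q) ↔ if p ≤ m ∧ m < q then 2 * (q - p) < v else v < 2 * (q - p) := by
  unfold EdgeIncr pathLen gemb Nat.dist
  split_ifs <;> omega

theorem card_unlengthened_chords_le (hx : 0 < x) (hz : 0 < z) (F : Finset (ℕ × ℕ))
    (hF : ∀ e ∈ F, e.1 < e.2 ∧ e.2 < v ∧ pathLen v e.1 e.2 = z ∧ ¬ EdgeIncr v x m e) :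
    #F ≤ v - z := by
  have hshape : ∀ e ∈ F, 2 * z ≤ v ∧ (e.2 = e.1 + z ∨ e.2 = e.1 + (v - z)) := fun e he => by
    obtain ⟨hlt, -, hlen, -⟩ := hF e he
    rw [pathLen_of_lt hlt] at hlen
    omega
  rcases F.eq_empty_or_nonempty with rfl | ⟨e₀, he₀⟩
  · simp
  obtain h2z | h2z := (hshape e₀ he₀).1.eq_or_lt
  -- for `2 * z = v` no chord of length `z` is lengthened, but there are only `v - z` of them
  · calc #F ≤ #(range (v - z)) :=
          card_le_card_of_fst_mem (d := z) (fun e he => by have := hshape e he; omega)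
            fun e he => by have := hshape e he; have := hF e he; rw [mem_range]; omega
      _ = v - z := card_range _
  have hshort : #{e ∈ F | e.2 = e.1 + z} ≤ #{p ∈ range (v - z) | ¬(p ≤ m ∧ m < p + z)} :=
    card_le_card_of_fst_mem (fun e he => (mem_filter.1 he).2) fun ⟨p, q⟩ he => by
      obtain ⟨heF, hd⟩ := mem_filter.1 he
      obtain ⟨hpq, hqv, -, hni⟩ := hF _ heF
      rw [edgeIncr_iff hx hpq hqv] at hni
      rw [mem_filter, mem_range]
      split_ifs at hni <;> omega
  have hlong : #{e ∈ F | ¬e.2 = e.1 + z} ≤ #{p ∈ range z | p ≤ m ∧ m < p + (v - z)} :=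
    card_le_card_of_fst_mem (d := v - z) (fun e he => by
        obtain ⟨heF, hd⟩ := mem_filter.1 he; have := hshape e heF; omega) fun ⟨p, q⟩ he => by
      obtain ⟨heF, hd⟩ := mem_filter.1 he
      obtain ⟨hpq, hqv, -, hni⟩ := hF _ heF
      have := hshape _ heF
      rw [edgeIncr_iff hx hpq hqv] at hni
      rw [mem_filter, mem_range]
      split_ifs at hni <;> omega
  -- a long chord keeps its length only if the gap separates its ends; `p ↦ m - p` matches its
  -- lower end with that of a short chord separated by the gap
  calc #F = #{e ∈ F | e.2 = e.1 + z} + #{e ∈ F | ¬e.2 = e.1 + z} :=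
        (card_filter_add_card_filter_not _).symm
    _ ≤ #{p ∈ range (v - z) | ¬(p ≤ m ∧ m < p + z)} + #{p ∈ range (v - z) | p ≤ m ∧ m < p + z} :=
        add_le_add hshort (hlong.trans (card_filter_straddle_le z (v - z) m))
    _ = v - z := by rw [add_comm, card_filter_add_card_filter_not, card_range]

end Chords

def sortPair (e : ℕ × ℕ) : ℕ × ℕ := (min e.1 e.2, max e.1 e.2)

lemma pathLen_sortPair (v : ℕ) (e : ℕ × ℕ) :
    pathLen v (sortPair e).1 (sortPair e).2 = pathLen v e.1 e.2 := by
  rcases le_total e.1 e.2 with h | h <;> simp [sortPair, h, pathLen_comm v e.1]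

lemma edgeIncr_sortPair {v x m : ℕ} (e : ℕ × ℕ) : EdgeIncr v x m (sortPair e) ↔ EdgeIncr v x m e := by
  rcases le_total e.1 e.2 with h | h
  · simp [sortPair, h]
  · rw [← edgeIncr_swap (e := e)]
    simp [sortPair, h, Prod.swap]

lemma nodup_map_sortPair_zip_tail : ∀ {l : List ℕ}, l.Nodup → ((l.zip l.tail).map sortPair).Nodup
  | [], _ => by simp
  | [_], _ => by simp
  | a :: b :: t, hnd => by
    rw [List.nodup_cons] at hnd
    simp only [List.tail_cons, List.zip_cons_cons, List.map_cons, List.nodup_cons]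
    refine ⟨fun hmem => ?_, nodup_map_sortPair_zip_tail hnd.2⟩
    obtain ⟨⟨p, q⟩, he, hpq⟩ := List.mem_map.1 hmem
    obtain ⟨hp, hq⟩ := List.of_mem_zip he
    simp only [sortPair, Prod.mk.injEq] at hpq
    have : a = p ∨ a = q := by omega
    exact hnd.1 (this.elim (· ▸ hp) (· ▸ List.mem_cons_of_mem b hq))

lemma count_lengths (v z : ℕ) (h : List ℕ) :
    (lengths v h).count z = (h.zip h.tail).countP fun e => pathLen v e.1 e.2 = z := by
  rw [lengths, Multiset.coe_count, ← List.map_uncurry_zip_eq_zipWith, List.count_eq_countP, List.countP_map]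
  rfl

section Growable

variable {v x m z : ℕ} {h : List ℕ}

lemma IsHamPath.lt_of_mem_zip_tail (hh : IsHamPath v h) {e : ℕ × ℕ} (he : e ∈ h.zip h.tail) :
    e.1 < v ∧ e.2 < v :=
  ⟨hh.2.2 _ (List.of_mem_zip he).1, hh.2.2 _ (List.mem_of_mem_tail (List.of_mem_zip he).2)⟩

theorem Growable.countP_edgeIncr_le (hg : Growable v x m h) :
    (h.zip h.tail).countP (fun e => EdgeIncr v x m e) ≤ x := by
  obtain ⟨hxm, hone, hcover⟩ := hg
  calc (h.zip h.tail).countP (fun e => EdgeIncr v x m e)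
      ≤ ∑ p ∈ Ico (m + 1 - x) (m + 1), (h.zip h.tail).countP fun e =>
          decide ((e.1 = p ∨ e.2 = p) ∧ EdgeIncr v x m e) :=
        List.countP_le_sum_countP fun e he hI => by
          obtain ⟨p, hp₁, hp₂, hpe⟩ := hcover e he (of_decide_eq_true hI)
          exact ⟨p, mem_Ico.2 ⟨by omega, by omega⟩, decide_eq_true ⟨hpe, of_decide_eq_true hI⟩⟩
    _ = ∑ _p ∈ Ico (m + 1 - x) (m + 1), 1 :=
        sum_congr rfl fun p hp => hone p (by rw [mem_Ico] at hp; omega) (by rw [mem_Ico] at hp; omega)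
    _ = x := by simp only [sum_const, Nat.card_Ico, smul_eq_mul, mul_one]; omega

theorem Growable.countP_pathLen_eq_le (hx : 0 < x) (hz : 0 < z) (hh : IsHamPath v h)
    (hg : Growable v x m h) :
    (h.zip h.tail).countP (fun e => pathLen v e.1 e.2 = z) ≤ x + (v - z) := by
  set P : ℕ × ℕ → Bool := fun e => pathLen v e.1 e.2 = z && !EdgeIncr v x m e
  have hP : ∀ e, P (sortPair e) = P e := fun e => by
    simp only [P, pathLen_sortPair, edgeIncr_sortPair]
  have hnd := (nodup_map_sortPair_zip_tail hh.1).filter P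
  have hkept : (h.zip h.tail).countP P ≤ v - z :=
    calc (h.zip h.tail).countP P = ((h.zip h.tail).map sortPair).countP P := by
          rw [List.countP_map]; exact congrArg (List.countP · _) (funext fun e => (hP e).symm)
      _ = #(((h.zip h.tail).map sortPair).filter P).toFinset := by
          rw [List.countP_eq_length_filter, List.toFinset_card_of_nodup hnd]
      _ ≤ v - z := card_unlengthened_chords_le (m := m) hx hz _ fun e' he' => by
          obtain ⟨hmem, hPe⟩ := List.mem_filter.1 (List.mem_toFinset.1 he')
          obtain ⟨e, he, rfl⟩ := List.mem_map.1 hmem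
          obtain ⟨hlen, hkeep⟩ : pathLen v e.1 e.2 = z ∧ ¬EdgeIncr v x m e := by
            simpa [P] using (hP e).symm.trans hPe
          have hne : e.1 ≠ e.2 := fun heq => by simp [pathLen, heq] at hlen; omega
          obtain ⟨h₁, h₂⟩ := hh.lt_of_mem_zip_tail he
          exact ⟨min_lt_max.2 hne, max_lt h₁ h₂, (pathLen_sortPair v e).trans hlen,
            (edgeIncr_sortPair e).not.2 hkeep⟩
  exact (List.countP_le_countP_add_countP _ _ _).trans (add_le_add hg.countP_edgeIncr_le hkept)

end Growable

theorem stmt_5_general (x y z a b c v : ℕ) (hxy : x < y) (hyz : y < z) (hx : 0 < x)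
    (hc : 0 < c)
    (hv : v = a + b + c + 1) (hab : a + b < z - x - 1) :
    ¬ ∃ (h : List ℕ) (m : ℕ), IsHamPath v h ∧
      lengths v h = Multiset.replicate a x + Multiset.replicate b y + Multiset.replicate c z ∧
      Growable v x m h := by
  rintro ⟨h, m, hh, hL, hg⟩
  have hcount : (h.zip h.tail).countP (fun e => pathLen v e.1 e.2 = z) = c := by
    rw [← count_lengths, hL]
    simp [Multiset.count_replicate, hxy.trans hyz |>.ne, hyz.ne]
  have hle := hg.countP_pathLen_eq_le hx (hx.trans (hxy.trans hyz)) hh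
  have hpos : 0 < (h.zip h.tail).countP (fun e => pathLen v e.1 e.2 = z) := hcount ▸ hc
  obtain ⟨e, -, he⟩ := List.countP_pos_iff.1 hpos
  have := two_mul_pathLen_le v e.1 e.2
  rw [decide_eq_true_eq] at he
  omega

theorem stmt_5 (x y z a b c v : ℕ) (hxy : x < y) (hyz : y < z) (hx : 0 < x)
    (ha : 0 < a) (hb : 0 < b) (hc : 0 < c)
    (hv : v = a + b + c + 1) (hab : a + b < z - x - 1) :
    ¬ ∃ (h : List ℕ) (m : ℕ), IsHamPath v h ∧
      lengths v h = Multiset.replicate a x + Multiset.replicate b y + Multiset.replicate c z ∧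
      Growable v x m h :=
  stmt_5_general x y z a b c v hxy hyz hx hc hv hab
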